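/- arXiv:1912.08970 — 2 statements merged into one kernel-verified Lean document; each statement's English description precedes it below -/
import Mathlib

section
/- Let C be a triangulated category and A ⊆ C a full triangulated subcategory such that for every object X of C there is a distinguished triangle Y → X → Z with Y ∈ A and Z ∈ A⊥. Then the inclusion A → C admits a right adjoint, given on objects by X ↦ Y. -/
open CategoryTheory Limits Pretriangulated

universe v u

/-!
For a distinguished triangle `Y ⟶ X ⟶ Z ⟶ Y⟦1⟧` with `Z` right orthogonal to the shift-closed
class `A`, the long exact `Hom(W, -)` sequence shows that every map `W ⟶ X` with `W ∈ A` factors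
uniquely through `Y ⟶ X`. So `Y ⟶ X` is a coreflection of `X` into `A`; coreflections of all
objects assemble into a right adjoint of the inclusion, and coreflections are unique up to
isomorphism.
-/

namespace CategoryTheory

namespace ObjectProperty

variable {C : Type u} [Category.{v} C] (P : ObjectProperty C)

def IsCoreflection {Y X : C} (f : Y ⟶ X) : Prop :=
  ∀ ⦃W : C⦄, P W → Function.Bijective (fun u : W ⟶ Y => u ≫ f)

variable {P}

lemma IsCoreflection.nonempty_iso {X Y Y' : C} {f : Y ⟶ X} {f' : Y' ⟶ X}
    (hf : P.IsCoreflection f) (hf' : P.IsCoreflection f') (hY : P Y) (hY' : P Y') :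
    Nonempty (Y ≅ Y') := by
  obtain ⟨u, hu⟩ := (hf hY').2 f'
  obtain ⟨v, hv⟩ := (hf' hY).2 f
  simp only at hu hv
  refine ⟨⟨v, u, (hf hY).1 ?_, (hf' hY').1 ?_⟩⟩ <;>
    simp only [Category.assoc, hu, hv, Category.id_comp]

lemma exists_rightAdjoint_of_isCoreflection
    (h : ∀ X : C, ∃ (Y : C) (f : Y ⟶ X), P Y ∧ P.IsCoreflection f) :
    ∃ (R : C ⥤ P.FullSubcategory) (_ : P.ι ⊣ R),
      ∀ X, ∃ f : (R.obj X).obj ⟶ X, P.IsCoreflection f := by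
  choose Y f hY hf using h
  let e (W : P.FullSubcategory) (X : C) : (P.ι.obj W ⟶ X) ≃ (W ⟶ ⟨Y X, hY X⟩) :=
    (Equiv.ofBijective (fun u => P.ι.map u ≫ f X)
      ((hf X W.2).comp InducedCategory.homEquiv.bijective)).symm
  have he : ∀ W' W X (q : W' ⟶ W) (v : P.ι.obj W ⟶ X),
      e W' X (P.ι.map q ≫ v) = q ≫ e W X v := by
    intro W' W X q v
    rw [Equiv.symm_apply_eq, Equiv.ofBijective_apply, Functor.map_comp, Category.assoc]
    exact congrArg _ ((e W X).symm_apply_apply v).symm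
  exact ⟨Adjunction.rightAdjointOfEquiv e he, Adjunction.adjunctionOfEquivRight e he,
    fun X => ⟨f X, hf X⟩⟩

end ObjectProperty

namespace Pretriangulated

variable {C : Type u} [Category.{v} C] [HasZeroObject C] [Preadditive C]
  [HasShift C ℤ] [∀ n : ℤ, (shiftFunctor C n).Additive] [Pretriangulated C]
  {T : Triangle C} (hT : T ∈ distTriang C) {W : C}

include hT

lemma comp_mor₁_surjective_of_distTriang (hW : ∀ u : W ⟶ T.obj₃, u = 0) :
    Function.Surjective (fun u : W ⟶ T.obj₁ => u ≫ T.mor₁) := fun v => by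
  obtain ⟨u, hu⟩ := Triangle.coyoneda_exact₂ T hT v (hW _)
  exact ⟨u, hu.symm⟩

lemma comp_mor₁_injective_of_distTriang (hW : ∀ u : W⟦(1 : ℤ)⟧ ⟶ T.obj₃, u = 0) :
    Function.Injective (fun u : W ⟶ T.obj₁ => u ≫ T.mor₁) := by
  refine (injective_iff_map_eq_zero (Preadditive.rightComp (C := C) W T.mor₁)).2
    fun u (hu : u ≫ T.mor₁ = 0) => ?_
  obtain ⟨v, hv⟩ := Triangle.coyoneda_exact₁ T hT (u⟦(1 : ℤ)⟧')
    (by rw [← Functor.map_comp, hu, Functor.map_zero])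
  rw [hW v, zero_comp, Functor.map_eq_zero_iff] at hv
  exact hv

lemma isCoreflection_mor₁_of_distTriang {P : ObjectProperty C}
    (hshift : ∀ X, P X → P (X⟦(1 : ℤ)⟧)) (hZ : ∀ W, P W → ∀ u : W ⟶ T.obj₃, u = 0) :
    P.IsCoreflection T.mor₁ := fun _ hW =>
  ⟨comp_mor₁_injective_of_distTriang hT (hZ _ (hshift _ hW)),
    comp_mor₁_surjective_of_distTriang hT (hZ _ hW)⟩

end Pretriangulated

end CategoryTheory

/-- Bondal–Kapranov: if `A` (with object class `P`, closed under isomorphisms and shifts)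
is a full triangulated subcategory of a (pre)triangulated category `C` such that every
`X : C` fits in a distinguished triangle `Y ⟶ X ⟶ Z ⟶ Y[1]` with `Y ∈ A` and
`Z ∈ A^⊥`, then the inclusion `A ⥤ C` admits a right adjoint `R`, given on objects by
`X ↦ Y`. -/
theorem inclusion_has_right_adjoint_of_triangles
    {C : Type u} [Category.{v} C] [HasZeroObject C] [Preadditive C]
    [HasShift C ℤ] [∀ n : ℤ, (shiftFunctor C n).Additive] [Pretriangulated C]
    (P : C → Prop)
    (hiso : ∀ {X Y : C}, (X ≅ Y) → P X → P Y)
    (hshift : ∀ (n : ℤ) (X : C), P X → P (X⟦n⟧))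
    (h : ∀ X : C, ∃ (Y Z : C) (f : Y ⟶ X) (g : X ⟶ Z) (w : Z ⟶ Y⟦(1 : ℤ)⟧),
      (Triangle.mk f g w ∈ distTriang C) ∧ P Y ∧ (∀ W, P W → ∀ u : W ⟶ Z, u = 0)) :
    ∃ (R : C ⥤ ObjectProperty.FullSubcategory P) (_ : ObjectProperty.ι P ⊣ R),
      ∀ (X Y Z : C) (f : Y ⟶ X) (g : X ⟶ Z) (w : Z ⟶ Y⟦(1 : ℤ)⟧),
        (Triangle.mk f g w ∈ distTriang C) → P Y →
        (∀ W, P W → ∀ u : W ⟶ Z, u = 0) →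
        Nonempty ((R.obj X).obj ≅ Y) := by
  have hcoreflection {X Y Z : C} {f : Y ⟶ X} {g : X ⟶ Z} {w : Z ⟶ Y⟦(1 : ℤ)⟧}
      (hT : Triangle.mk f g w ∈ distTriang C) (hZ : ∀ W, P W → ∀ u : W ⟶ Z, u = 0) :
      ObjectProperty.IsCoreflection P f :=
    isCoreflection_mor₁_of_distTriang hT (hshift 1) hZ
  obtain ⟨R, adj, hR⟩ := ObjectProperty.exists_rightAdjoint_of_isCoreflection (P := P) fun X => by
    obtain ⟨Y, Z, f, g, w, hT, hY, hZ⟩ := h X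
    exact ⟨Y, f, hY, hcoreflection hT hZ⟩
  refine ⟨R, adj, fun X Y Z f g w hT hY hZ => ?_⟩
  obtain ⟨_, hr⟩ := hR X
  exact hr.nonempty_iso (hcoreflection hT hZ) (R.obj X).property hY
end

section
/- Let C be a triangulated category, A ⊆ C a full triangulated subcategory whose inclusion admits a right adjoint R. Then the composite functor A⊥ → C → C/A from the right orthogonal to the Verdier quotient is an equivalence of categories. -/
open CategoryTheory Limits Pretriangulated

universe v v' u u'

/-!
The cone `X ⟶ Q X` of the counit `i R X ⟶ X` lies in `A⊥`, and the cone of `X ⟶ Q X` is the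
shift of `i R X ∈ A`, so this morphism belongs to the class `W` inverted by the Verdier
quotient. Every morphism of `W` induces bijections on maps into `A⊥`, so `X ↦ Q X` is a left
adjoint of the inclusion `A⊥ ⥤ C` that inverts `W` and has its unit in `W`; it is therefore a
localization at `W`, like `L`. Through the comparison equivalence, the composite
`A⊥ ⥤ C ⥤ C/A` becomes `Q ∘ i ≅ 𝟭`.
-/

namespace CategoryTheory

lemma Adjunction.isEquivalence_comp_of_isLocalization {C D E : Type*} [Category* C]
    [Category* D] [Category* E] {G : C ⥤ D} {F : D ⥤ C} (adj : G ⊣ F) [F.Full] [F.Faithful]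
    (W : MorphismProperty C) [G.IsLocalization W] (L : C ⥤ E) [L.IsLocalization W] :
    (F ⋙ L).IsEquivalence := by
  let e : (F ⋙ L) ⋙ (Localization.uniq L G W).functor ≅ 𝟭 D :=
    Functor.associator _ _ _ ≪≫
      Functor.isoWhiskerLeft F (Localization.compUniqFunctor L G W) ≪≫ asIso adj.counit
  have := Functor.isEquivalence_of_iso e.symm
  exact Functor.isEquivalence_of_comp_right _ (Localization.uniq L G W).functor

namespace ObjectProperty

section

variable {C : Type*} [Category* C] (P : ObjectProperty C)

lemma range_ι_obj : (· ∈ Set.range P.ι.obj) = P := by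
  ext X
  exact ⟨by rintro ⟨Y, rfl⟩; exact Y.property, fun hX => ⟨⟨X, hX⟩, rfl⟩⟩

variable {P}

noncomputable def leftAdjointOfIsLocal {Z : C → P.FullSubcategory} (p : ∀ X, X ⟶ (Z X).obj)
    (hp : ∀ X, P.isLocal (p X)) : C ⥤ P.FullSubcategory :=
  Adjunction.leftAdjointOfEquiv (G := P.ι) (F_obj := Z)
    (fun X Y => P.fullyFaithfulι.homEquiv.trans ((hp X).homEquiv Y.obj Y.property))
    (fun _ _ _ _ _ => (Category.assoc _ _ _).symm)

noncomputable def adjunctionOfIsLocal {Z : C → P.FullSubcategory} (p : ∀ X, X ⟶ (Z X).obj)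
    (hp : ∀ X, P.isLocal (p X)) : leftAdjointOfIsLocal p hp ⊣ P.ι :=
  Adjunction.adjunctionOfEquivLeft _ _

@[simp]
lemma adjunctionOfIsLocal_unit_app {Z : C → P.FullSubcategory} (p : ∀ X, X ⟶ (Z X).obj)
    (hp : ∀ X, P.isLocal (p X)) (X : C) : (adjunctionOfIsLocal p hp).unit.app X = p X :=
  Category.comp_id _

lemma isColocal.shift {M : Type*} [AddGroup M] [HasShift C M] [P.IsStableUnderShift M]
    {X Y : C} {f : X ⟶ Y} (hf : P.isColocal f) (n : M) : P.isColocal (f⟦n⟧') := by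
  intro A hA
  let e : ∀ Y' : C, (A⟦-n⟧ ⟶ Y') ≃ (A ⟶ Y'⟦n⟧) :=
    (shiftEquiv C n).symm.toAdjunction.homEquiv A
  have he : ∀ g : A⟦-n⟧ ⟶ X, e Y (g ≫ f) = e X g ≫ f⟦n⟧' := fun g =>
    Adjunction.homEquiv_naturality_right _ _ _
  have : (fun g : A ⟶ X⟦n⟧ => g ≫ f⟦n⟧') = e Y ∘ (· ≫ f) ∘ (e X).symm := by
    funext g
    simp only [Function.comp_apply, he, Equiv.apply_symm_apply]
  rw [this]
  exact (e Y).bijective.comp ((hf _ (P.le_shift (-n) A hA)).comp (e X).symm.bijective)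

end

variable {C : Type*} [Category* C] [HasZeroObject C] [Preadditive C] [HasShift C ℤ]
  [∀ n : ℤ, (shiftFunctor C n).Additive] [Pretriangulated C] {P : ObjectProperty C}
  [P.IsStableUnderShift ℤ]

lemma rightOrthogonal_obj₃_of_isColocal_mor₁ {T : Triangle C} (hT : T ∈ distTriang C)
    (h : P.isColocal T.mor₁) : P.rightOrthogonal T.obj₃ := by
  intro A φ hA
  have hφ : φ ≫ T.mor₃ = 0 := (h.shift 1 A hA).injective <| by
    simp [comp_distTriang_mor_zero₃₁ T hT]
  obtain ⟨β, rfl⟩ := Triangle.coyoneda_exact₃ T hT φ hφ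
  obtain ⟨γ, rfl⟩ := (h A hA).surjective β
  simp [comp_distTriang_mor_zero₁₂ T hT]

lemma isLocal_rightOrthogonal_mor₁ {T : Triangle C} (hT : T ∈ distTriang C) (h : P T.obj₃) :
    P.rightOrthogonal.isLocal T.mor₁ := by
  intro Y hY
  refine ⟨fun α₁ α₂ hα => ?_, fun α => ?_⟩
  · obtain ⟨β, hβ⟩ := Triangle.yoneda_exact₂ T hT (α₁ - α₂)
      (by rw [Preadditive.comp_sub, sub_eq_zero]; exact hα)
    rw [hY β h, comp_zero] at hβ
    exact sub_eq_zero.1 hβ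
  · obtain ⟨β, hβ⟩ := Triangle.yoneda_exact₂ _ (inv_rot_of_distTriang _ hT) α
      (hY _ (P.le_shift _ _ h))
    exact ⟨β, hβ.symm⟩

lemma trW_le_isLocal_rightOrthogonal : P.trW ≤ P.rightOrthogonal.isLocal := by
  rintro X₁ X₂ f ⟨X₃, g, h, hT, hX₃⟩
  exact isLocal_rightOrthogonal_mor₁ hT hX₃

lemma exists_trW_rightOrthogonal {R : C ⥤ P.FullSubcategory} (adj : P.ι ⊣ R) (X : C) :
    ∃ (Z : P.rightOrthogonal.FullSubcategory) (p : X ⟶ Z.obj), P.trW p := by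
  obtain ⟨Z, p, w, hT⟩ := distinguished_cocone_triangle (adj.counit.app X)
  have hcounit : P.isColocal (adj.counit.app X) := by
    simpa only [range_ι_obj] using isColocal_adj_counit_app adj X
  exact ⟨⟨Z, rightOrthogonal_obj₃_of_isColocal_mor₁ hT hcounit⟩, p,
    trW.mk' P hT (R.obj X).property⟩

end ObjectProperty

end CategoryTheory

/-- Let `C` be a (pre)triangulated category and `A` a thick full triangulated subcategory
(object class `P`, closed under isomorphisms, shifts, extensions and retracts) whose
inclusion admits a right adjoint `R`.  Let `L : C ⥤ D` be the Verdier quotient of `C`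
by `A`, i.e. the localization at the class of morphisms whose cone lies in `A`.  Then the
composite `A^⊥ ⥤ C ⥤ C/A` of the inclusion of the right orthogonal with the quotient
functor is an equivalence of categories. -/
theorem orthogonal_to_verdier_quotient_is_equivalence
    {C : Type u} [Category.{v} C] [HasZeroObject C] [Preadditive C]
    [HasShift C ℤ] [∀ n : ℤ, (shiftFunctor C n).Additive] [Pretriangulated C]
    (P : C → Prop)
    (hiso : ∀ {X Y : C}, (X ≅ Y) → P X → P Y)
    (hshift : ∀ (n : ℤ) (X : C), P X → P (X⟦n⟧))
    (hext : ∀ T : Triangle C, (T ∈ distTriang C) → P T.obj₁ → P T.obj₃ → P T.obj₂)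
    (hretract : ∀ (X Y : C) (s : X ⟶ Y) (p : Y ⟶ X), s ≫ p = 𝟙 X → P Y → P X)
    (R : C ⥤ ObjectProperty.FullSubcategory P) (adj : ObjectProperty.ι P ⊣ R)
    {D : Type u'} [Category.{v'} D] (L : C ⥤ D)
    (hL : L.IsLocalization (fun (X Y : C) (f : X ⟶ Y) =>
      ∃ (Z : C) (g : Y ⟶ Z) (w : Z ⟶ X⟦(1 : ℤ)⟧),
        (Triangle.mk f g w ∈ distTriang C) ∧ P Z)) :
    (ObjectProperty.ι
        (fun X : C => ∀ (Y : C), P Y → ∀ f : Y ⟶ X, f = 0) ⋙ L).IsEquivalence := by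
  open ObjectProperty in
  have : IsStableUnderShift P ℤ := ⟨fun n => ⟨hshift n⟩⟩
  have hW : (fun (X Y : C) (f : X ⟶ Y) => ∃ (Z : C) (g : Y ⟶ Z) (w : Z ⟶ X⟦(1 : ℤ)⟧),
      (Triangle.mk f g w ∈ distTriang C) ∧ P Z) = trW P := by
    ext X Y f
    simp only [trW_iff, exists_prop]
  have hP : (fun X : C => ∀ (Y : C), P Y → ∀ f : Y ⟶ X, f = 0) = rightOrthogonal P := by
    ext X
    exact ⟨fun h Y f hY => h Y hY f, fun h Y hY f => h f hY⟩
  rw [hW] at hL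
  rw [hP]
  choose Z p hp using exists_trW_rightOrthogonal adj
  let adjG := adjunctionOfIsLocal p fun X => trW_le_isLocal_rightOrthogonal _ (hp X)
  have : (leftAdjointOfIsLocal p _).IsLocalization (trW P) :=
    adjG.isLocalization_leftAdjoint _
      (fun _ _ f hf => (isLocal_iff_isIso_map adjG f).1 <| by
        simpa only [range_ι_obj] using trW_le_isLocal_rightOrthogonal f hf)
      (fun X => by rw [adjunctionOfIsLocal_unit_app]; exact hp X)
  exact adjG.isEquivalence_comp_of_isLocalization (trW P) L
end
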